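/- Let m ∈ ℕ with m ≥ 2 be fixed, let 0 < T ≤ m−1, and let g(t) = t^m on [0,T]. Then lim_{β→0⁺} ‖ᶜᶠ₀D^{1−β}g − g'‖_{L¹(0,T)} / ‖ᶜ₀D^{1−β}g − g'‖_{L¹(0,T)} = ((m−T)/T) · 1/(Ψ(m+1) − ln T), where Ψ is the digamma function Ψ(x) = Γ'(x)/Γ(x). -/

import Mathlib

open MeasureTheory Filter Set

/-- Caputo fractional derivative of order `α` with base point `a`,
expressed in terms of the derivative `g'`. -/
noncomputable def caputoD (a α : ℝ) (g' : ℝ → ℝ) (t : ℝ) : ℝ :=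
  (1 / Real.Gamma (1 - α)) * ∫ τ in a..t, g' τ * (t - τ) ^ (-α)

/-- Caputo–Fabrizio fractional derivative of order `α` with base point `a`,
expressed in terms of the derivative `g'`. -/
noncomputable def cfD (a α : ℝ) (g' : ℝ → ℝ) (t : ℝ) : ℝ :=
  (1 / (1 - α)) * ∫ τ in a..t, g' τ * Real.exp (-(α / (1 - α)) * (t - τ))

/-- The digamma function `Ψ(x) = Γ'(x)/Γ(x)`. -/
noncomputable def digamma (x : ℝ) : ℝ := deriv Real.Gamma x / Real.Gamma x


/-!
For `g(t) = t^m` the Caputo derivative of order `1 - β` is `Γ(m+1)/Γ(m+β) t^(m+β-1)`, which by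
log-convexity of `Γ` lies below `g'` on `[0, m-1]`. Hence the Caputo error is `G(0) - G(β)` with
`G(b) = Γ(m+1)/Γ(m+1+b) T^(m+b)`, and divided by `β` it tends to `-G'(0) = T^m (Ψ(m+1) - log T)`.

The Caputo–Fabrizio derivative of `f = g'` is `β⁻¹ K_c f`, where `K_c` is convolution with `e^(-ct)`
and `c = (1-β)/β`. Integration by parts gives `f - β⁻¹ K_c f = K_c (f' - f)` (as `f(0) = 0`), which
is nonnegative on `[0, m-1]`, and integrating `(K_c h)' = h - c K_c h` gives
`c ∫₀ᵀ K_c h = ∫₀ᵀ h - K_c h(T)`. As `K_c h(T) → 0` when `c → ∞`, the Caputo–Fabrizio error divided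
by `β` tends to `∫₀ᵀ (f' - f) = m T^(m-1) - T^m`.
-/
open Real Topology

theorem integral_rpow_mul_rpow_sub {a b t : ℝ} (ha : 0 < a) (hb : 0 < b) (ht : 0 < t) :
    ∫ τ in (0 : ℝ)..t, τ ^ (a - 1) * (t - τ) ^ (b - 1) =
      Gamma a * Gamma b / Gamma (a + b) * t ^ (a + b - 1) := by
  have hΓ : Gamma (a + b) ≠ 0 := (Gamma_pos_of_pos (add_pos ha hb)).ne'
  have hbeta := Complex.Gamma_mul_Gamma_eq_betaIntegral (s := a) (t := b) (by simpa) (by simpa)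
  have hscaled := Complex.betaIntegral_scaled a b ht
  have hlift : ((∫ τ in (0 : ℝ)..t, τ ^ (a - 1) * (t - τ) ^ (b - 1) : ℝ) : ℂ) =
      ∫ τ in (0 : ℝ)..t, (τ : ℂ) ^ ((a : ℂ) - 1) * ((t : ℂ) - τ) ^ ((b : ℂ) - 1) := by
    rw [← intervalIntegral.integral_ofReal]
    refine intervalIntegral.integral_congr fun τ hτ => ?_
    rw [uIcc_of_le ht.le] at hτ
    simp only [Complex.ofReal_mul, Complex.ofReal_cpow hτ.1,
      Complex.ofReal_cpow (sub_nonneg.mpr hτ.2), Complex.ofReal_sub, Complex.ofReal_one]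
  rw [div_mul_eq_mul_div, eq_div_iff hΓ]
  apply Complex.ofReal_injective
  rw [Complex.ofReal_mul, Complex.ofReal_mul, Complex.ofReal_mul, Complex.ofReal_cpow ht.le,
    ← Complex.Gamma_ofReal, ← Complex.Gamma_ofReal, ← Complex.Gamma_ofReal, hlift, hscaled,
    hbeta]
  push_cast
  ring

theorem caputoD_rpow {p α t : ℝ} (hp : 0 < p) (hα : α < 1) (ht : 0 < t) :
    caputoD 0 α (fun τ => p * τ ^ (p - 1)) t = Gamma (p + 1) / Gamma (p + 1 - α) * t ^ (p - α) := by
  have hbeta := integral_rpow_mul_rpow_sub hp (sub_pos.mpr hα) ht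
  rw [add_sub_assoc', sub_sub_cancel_left, show p + 1 - α - 1 = p - α by ring] at hbeta
  simp only [caputoD, mul_assoc, intervalIntegral.integral_const_mul, hbeta, Gamma_add_one hp.ne']
  field_simp [(Gamma_pos_of_pos (sub_pos.mpr hα)).ne']

theorem log_le_digamma_add_one {x : ℝ} (hx : 0 < x) : log x ≤ digamma (x + 1) := by
  have hx1 : 0 < x + 1 := by linarith
  have hderiv : HasDerivAt (log ∘ Gamma) (digamma (x + 1)) (x + 1) :=
    (differentiableOn_Gamma_Ioi.differentiableAt (Ioi_mem_nhds hx1)).hasDerivAt.log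
      (Gamma_pos_of_pos hx1).ne'
  refine le_of_eq_of_le ?_ (convexOn_log_Gamma.slope_le_of_hasDerivAt hx hx1 (lt_add_one x) hderiv)
  rw [slope_def_field, add_sub_cancel_left, div_one, Function.comp_apply, Function.comp_apply,
    Gamma_add_one hx.ne', log_mul hx.ne' (Gamma_pos_of_pos hx).ne', add_sub_cancel_right]

theorem Gamma_mul_rpow_le_Gamma_add {n : ℕ} (hn : 2 ≤ n) {x : ℝ} (hx : 0 < x) :
    Gamma n * ((n : ℝ) - 1) ^ x ≤ Gamma (n + x) := by
  have hn1 : (0 : ℝ) < n - 1 := by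
    have : (2 : ℝ) ≤ n := by exact_mod_cast hn
    linarith
  have hlog := BohrMollerup.f_add_nat_ge convexOn_log_Gamma (fun {y} hy => by
    rw [Function.comp_apply, Gamma_add_one hy.ne', log_mul hy.ne' (Gamma_pos_of_pos hy).ne',
      add_comm, Function.comp_apply]) hn hx
  rw [Function.comp_apply, Function.comp_apply, ← log_rpow hn1,
    ← log_mul (Gamma_pos_of_pos (by linarith)).ne' (rpow_pos_of_pos hn1 x).ne',
    log_le_log_iff (by positivity) (Gamma_pos_of_pos (by linarith))] at hlog
  exact hlog

theorem integral_natCast_mul_pow_pred {m : ℕ} (hm : m ≠ 0) (T : ℝ) :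
    ∫ x in (0 : ℝ)..T, (m : ℝ) * x ^ (m - 1) = T ^ m := by
  rw [intervalIntegral.integral_eq_sub_of_hasDerivAt (fun x _ => hasDerivAt_pow m x)
    ((continuous_const.mul (continuous_pow _)).intervalIntegrable 0 T), zero_pow hm, sub_zero]

theorem pow_le_natCast_mul_pow_pred {n : ℕ} (hn : n ≠ 0) {x : ℝ} (hx : 0 ≤ x) (hxn : x ≤ n) :
    x ^ n ≤ n * x ^ (n - 1) := by
  rw [← pow_sub_one_mul hn, mul_comm]
  exact mul_le_mul_of_nonneg_right hxn (pow_nonneg hx _)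

theorem caputoD_natCast_mul_pow_pred {m : ℕ} (hm : m ≠ 0) {α t : ℝ} (hα : α < 1) (ht : 0 < t) :
    caputoD 0 α (fun τ => (m : ℝ) * τ ^ (m - 1)) t =
      Gamma (m + 1) / Gamma (m + 1 - α) * t ^ ((m : ℝ) - α) := by
  have hpow : (fun τ : ℝ => (m : ℝ) * τ ^ (m - 1)) = fun τ => (m : ℝ) * τ ^ ((m : ℝ) - 1) := by
    ext τ
    rw [← Nat.cast_pred (Nat.pos_of_ne_zero hm), rpow_natCast]
  rw [hpow, caputoD_rpow (Nat.cast_pos.mpr (Nat.pos_of_ne_zero hm)) hα ht]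

theorem caputoD_natCast_mul_pow_pred_le {m : ℕ} (hm : 2 ≤ m) {β t : ℝ} (hβ : 0 < β) (ht : 0 < t)
    (htm : t ≤ (m : ℝ) - 1) :
    caputoD 0 (1 - β) (fun τ => (m : ℝ) * τ ^ (m - 1)) t ≤ m * t ^ (m - 1) := by
  have hΓ : 0 < Gamma (m + β) := Gamma_pos_of_pos (by positivity)
  rw [caputoD_natCast_mul_pow_pred (by omega) (by linarith) ht,
    show (m : ℝ) + 1 - (1 - β) = m + β by ring,
    show (m : ℝ) - (1 - β) = β + ((m - 1 : ℕ) : ℝ) by rw [Nat.cast_pred (by omega)]; ring,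
    rpow_add ht, rpow_natCast, ← mul_assoc]
  refine mul_le_mul_of_nonneg_right ?_ (pow_nonneg ht.le _)
  calc Gamma (m + 1) / Gamma (m + β) * t ^ β = m * (Gamma m * t ^ β) / Gamma (m + β) := by
        rw [Gamma_add_one (by positivity)]; ring
    _ ≤ m * Gamma (m + β) / Gamma (m + β) := by
        gcongr
        exact (mul_le_mul_of_nonneg_left (rpow_le_rpow ht.le htm hβ.le)
          (Gamma_pos_of_pos (by positivity)).le).trans (Gamma_mul_rpow_le_Gamma_add hm hβ)
    _ = m := by field_simp

theorem integral_abs_caputoD_sub_pow {m : ℕ} (hm : 2 ≤ m) {T β : ℝ} (hT : 0 < T)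
    (hTm : T ≤ (m : ℝ) - 1) (hβ : 0 < β) :
    ∫ t in Ioo 0 T, |caputoD 0 (1 - β) (fun τ => (m : ℝ) * τ ^ (m - 1)) t - m * t ^ (m - 1)| =
      T ^ m - Gamma (m + 1) / Gamma (m + 1 + β) * T ^ ((m : ℝ) + β) := by
  have hm0 : m ≠ 0 := by omega
  have hmβ : 0 < (m : ℝ) + β := by positivity
  have habs : ∀ t ∈ Ioo 0 T,
      |caputoD 0 (1 - β) (fun τ => (m : ℝ) * τ ^ (m - 1)) t - m * t ^ (m - 1)| =
        m * t ^ (m - 1) - Gamma (m + 1) / Gamma (m + β) * t ^ ((m : ℝ) + β - 1) := by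
    intro t ht
    rw [abs_sub_comm, abs_of_nonneg (sub_nonneg.mpr (caputoD_natCast_mul_pow_pred_le hm hβ ht.1
      (ht.2.le.trans hTm))), caputoD_natCast_mul_pow_pred hm0 (by linarith) ht.1,
      show (m : ℝ) + 1 - (1 - β) = m + β by ring, show (m : ℝ) - (1 - β) = m + β - 1 by ring]
  rw [setIntegral_congr_fun measurableSet_Ioo habs,
    ← integral_Ioc_eq_integral_Ioo, ← intervalIntegral.integral_of_le hT.le,
    intervalIntegral.integral_sub
      ((by fun_prop : Continuous fun x : ℝ => (m : ℝ) * x ^ (m - 1)).intervalIntegrable 0 T)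
      ((intervalIntegral.intervalIntegrable_rpow' (by linarith)).const_mul _),
    integral_natCast_mul_pow_pred hm0, intervalIntegral.integral_const_mul,
    integral_rpow (Or.inl (by linarith)), sub_add_cancel, zero_rpow hmβ.ne', sub_zero,
    show (m : ℝ) + 1 + β = (m + β) + 1 by ring, Gamma_add_one hmβ.ne']
  field_simp

theorem hasDerivAt_Gamma_div_Gamma_add_mul_rpow {p T : ℝ} (hp : 0 < p) (hT : 0 < T) :
    HasDerivAt (fun b => Gamma (p + 1) / Gamma (p + 1 + b) * T ^ (p + b))
      (T ^ p * (log T - digamma (p + 1))) 0 := by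
  have hp1 : 0 < p + 1 := by linarith
  have hΓ : HasDerivAt (fun b => Gamma (p + 1 + b)) (deriv Gamma (p + 1)) 0 := by
    have := (differentiableOn_Gamma_Ioi.differentiableAt (Ioi_mem_nhds hp1)).hasDerivAt
    exact HasDerivAt.comp_const_add (p + 1) 0 (by rwa [add_zero])
  have hpow : HasDerivAt (fun b => T ^ (p + b)) (log T * 1 * T ^ (p + 0)) 0 :=
    ((hasDerivAt_id' 0).const_add p).const_rpow hT
  have hΓ0 : Gamma (p + 1) ≠ 0 := (Gamma_pos_of_pos hp1).ne'
  have h := ((hΓ.fun_inv (by simpa using hΓ0)).const_mul (Gamma (p + 1))).fun_mul hpow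
  simp only [← div_eq_mul_inv, add_zero] at h
  refine h.congr_deriv ?_
  simp only [digamma]
  field_simp
  ring

theorem tendsto_integral_abs_caputoD_sub_pow_div {m : ℕ} (hm : 2 ≤ m) {T : ℝ} (hT : 0 < T)
    (hTm : T ≤ (m : ℝ) - 1) :
    Tendsto (fun β => (∫ t in Ioo 0 T,
        |caputoD 0 (1 - β) (fun τ => (m : ℝ) * τ ^ (m - 1)) t - m * t ^ (m - 1)|) / β)
      (𝓝[>] 0) (𝓝 (T ^ m * (digamma (m + 1) - log T))) := by
  have hslope := (hasDerivAt_iff_tendsto_slope.mp (hasDerivAt_Gamma_div_Gamma_add_mul_rpow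
    (Nat.cast_pos.mpr (by omega : 0 < m)) hT)).neg.mono_left
    (nhdsWithin_mono _ fun x (hx : 0 < x) => hx.ne')
  rw [rpow_natCast, ← mul_neg, neg_sub] at hslope
  refine hslope.congr' ?_
  filter_upwards [self_mem_nhdsWithin] with β (hβ : 0 < β)
  have hΓ := (Gamma_pos_of_pos (by positivity : (0 : ℝ) < m + 1)).ne'
  rw [integral_abs_caputoD_sub_pow hm hT hTm hβ, slope_def_field]
  simp only [add_zero, div_self hΓ, one_mul, rpow_natCast, sub_zero]
  ring

noncomputable def expConv (c : ℝ) (f : ℝ → ℝ) (t : ℝ) : ℝ :=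
  ∫ τ in (0 : ℝ)..t, f τ * exp (-c * (t - τ))

section ExpConv

variable {c : ℝ} {f : ℝ → ℝ}

theorem expConv_eq_exp_mul_integral (c : ℝ) (f : ℝ → ℝ) (t : ℝ) :
    expConv c f t = exp (-c * t) * ∫ τ in (0 : ℝ)..t, f τ * exp (c * τ) := by
  rw [expConv, ← intervalIntegral.integral_const_mul]
  refine intervalIntegral.integral_congr fun τ _ => ?_
  rw [mul_left_comm, ← exp_add]
  ring_nf

theorem hasDerivAt_expConv (hf : Continuous f) (t : ℝ) :
    HasDerivAt (expConv c f) (f t - c * expConv c f t) t := by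
  have hint : HasDerivAt (fun t => ∫ τ in (0 : ℝ)..t, f τ * exp (c * τ)) (f t * exp (c * t)) t :=
    ((by fun_prop : Continuous fun τ => f τ * exp (c * τ)).integral_hasStrictDerivAt 0 t).hasDerivAt
  have hexp : HasDerivAt (fun t => exp (-c * t)) (exp (-c * t) * (-c * 1)) t :=
    ((hasDerivAt_id t).const_mul (-c)).exp
  have h := hexp.fun_mul hint
  rw [← funext (expConv_eq_exp_mul_integral c f)] at h
  refine h.congr_deriv ?_
  rw [expConv_eq_exp_mul_integral, mul_left_comm (exp _) (f t), ← exp_add, neg_mul, neg_add_cancel,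
    exp_zero]
  ring

theorem continuous_expConv (hf : Continuous f) : Continuous (expConv c f) :=
  continuous_iff_continuousAt.mpr fun t => (hasDerivAt_expConv hf t).continuousAt

theorem mul_integral_expConv (hf : Continuous f) (T : ℝ) :
    c * ∫ t in (0 : ℝ)..T, expConv c f t = (∫ t in (0 : ℝ)..T, f t) - expConv c f T := by
  have hftc := intervalIntegral.integral_eq_sub_of_hasDerivAt
    (fun t _ => hasDerivAt_expConv (c := c) hf t)
    ((hf.sub (continuous_const.mul (continuous_expConv (c := c) hf))).intervalIntegrable 0 T)
  rw [intervalIntegral.integral_sub (hf.intervalIntegrable 0 T)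
    (((continuous_expConv hf).intervalIntegrable 0 T).const_mul c),
    intervalIntegral.integral_const_mul,
    show expConv c f 0 = 0 from intervalIntegral.integral_same, sub_zero] at hftc
  linarith

theorem mul_expConv_of_hasDerivAt {f' : ℝ → ℝ} (hf : ∀ x, HasDerivAt f (f' x) x)
    (hf' : Continuous f') (t : ℝ) :
    c * expConv c f t = f t - f 0 * exp (-c * t) - expConv c f' t := by
  have hfc : Continuous f := continuous_iff_continuousAt.mpr fun x => (hf x).continuousAt
  have hderiv : ∀ τ, HasDerivAt (fun τ => f τ * exp (-c * (t - τ)))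
      (f' τ * exp (-c * (t - τ)) + c * (f τ * exp (-c * (t - τ)))) τ := fun τ => by
    refine ((hf τ).mul (((hasDerivAt_id' τ).const_sub t).const_mul (-c)).exp).congr_deriv ?_
    ring
  have hftc := intervalIntegral.integral_eq_sub_of_hasDerivAt (a := 0) (b := t)
    (fun τ _ => hderiv τ) (by apply Continuous.intervalIntegrable; fun_prop)
  rw [intervalIntegral.integral_add (by apply Continuous.intervalIntegrable; fun_prop)
    (by apply Continuous.intervalIntegrable; fun_prop), intervalIntegral.integral_const_mul,
    sub_self, mul_zero, exp_zero, mul_one, sub_zero] at hftc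
  rw [expConv, expConv]
  linarith

theorem expConv_nonneg {t : ℝ} (ht : 0 ≤ t) (hf : ∀ τ ∈ Icc 0 t, 0 ≤ f τ) : 0 ≤ expConv c f t :=
  intervalIntegral.integral_nonneg ht fun τ hτ => mul_nonneg (hf τ hτ) (exp_pos _).le

theorem tendsto_expConv_atTop (hf : Continuous f) {T : ℝ} (hT : 0 ≤ T) :
    Tendsto (fun c => expConv c f T) atTop (𝓝 0) := by
  have hlim := intervalIntegral.tendsto_integral_filter_of_dominated_convergence
    (μ := volume) (a := 0) (b := T) (l := atTop) (f := fun _ => (0 : ℝ))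
    (F := fun c τ => f τ * exp (-c * (T - τ))) (fun τ => |f τ|) ?_ ?_ ?_ ?_
  · rwa [intervalIntegral.integral_zero] at hlim
  · exact Eventually.of_forall fun c => (by fun_prop : Continuous _).aestronglyMeasurable
  · filter_upwards [eventually_ge_atTop 0] with c hc
    refine Eventually.of_forall fun τ hτ => ?_
    rw [uIoc_of_le hT] at hτ
    rw [norm_mul, Real.norm_eq_abs, norm_of_nonneg (exp_pos _).le]
    refine mul_le_of_le_one_right (abs_nonneg _) (exp_le_one_iff.mpr ?_)
    nlinarith [hτ.2]
  · exact hf.abs.intervalIntegrable 0 T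
  · filter_upwards [volume.ae_ne T] with τ hτT hτ
    rw [uIoc_of_le hT] at hτ
    have hpos : 0 < T - τ := sub_pos.mpr (lt_of_le_of_ne hτ.2 hτT)
    have hexp : Tendsto (fun c : ℝ => -c * (T - τ)) atTop atBot :=
      (tendsto_neg_atTop_atBot.comp (tendsto_id.atTop_mul_const hpos)).congr
        fun c => (neg_mul c _).symm
    simpa using (tendsto_exp_atBot.comp hexp).const_mul (f τ)

end ExpConv

section CaputoFabrizio

variable {f f' : ℝ → ℝ}

theorem sub_cfD_eq_expConv {α : ℝ} (hα : α ≠ 1) (hf : ∀ x, HasDerivAt f (f' x) x)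
    (hf' : Continuous f') (hf0 : f 0 = 0) (t : ℝ) :
    f t - cfD 0 α f t = expConv (α / (1 - α)) (fun τ => f' τ - f τ) t := by
  have hfc : Continuous f := continuous_iff_continuousAt.mpr fun x => (hf x).continuousAt
  have hparts := mul_expConv_of_hasDerivAt (c := α / (1 - α)) hf hf' t
  have hsub : expConv (α / (1 - α)) (fun τ => f' τ - f τ) t =
      expConv (α / (1 - α)) f' t - expConv (α / (1 - α)) f t := by
    simp only [expConv, sub_mul]
    exact intervalIntegral.integral_sub (by apply Continuous.intervalIntegrable; fun_prop)
      (by apply Continuous.intervalIntegrable; fun_prop)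
  have hcfD : cfD 0 α f t = (1 + α / (1 - α)) * expConv (α / (1 - α)) f t := by
    rw [cfD, expConv, one_add_div (sub_ne_zero.mpr hα.symm), sub_add_cancel]
  rw [hf0, zero_mul, sub_zero] at hparts
  rw [hcfD, hsub]
  linarith

theorem integral_abs_cfD_sub {α : ℝ} (hα : α ≠ 1) (hf : ∀ x, HasDerivAt f (f' x) x)
    (hf' : Continuous f') (hf0 : f 0 = 0) {T : ℝ} (hT : 0 ≤ T) (hle : ∀ τ ∈ Icc 0 T, f τ ≤ f' τ) :
    α / (1 - α) * ∫ t in Ioo 0 T, |cfD 0 α f t - f t| =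
      (∫ t in (0 : ℝ)..T, (f' t - f t)) - expConv (α / (1 - α)) (fun τ => f' τ - f τ) T := by
  have hfc : Continuous f := continuous_iff_continuousAt.mpr fun x => (hf x).continuousAt
  have habs : ∀ t ∈ Ioo 0 T,
      |cfD 0 α f t - f t| = expConv (α / (1 - α)) (fun τ => f' τ - f τ) t := by
    intro t ht
    rw [abs_sub_comm, sub_cfD_eq_expConv hα hf hf' hf0, abs_of_nonneg (expConv_nonneg ht.1.le
      fun τ hτ => sub_nonneg.mpr (hle τ ⟨hτ.1, hτ.2.trans ht.2.le⟩))]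
  rw [setIntegral_congr_fun measurableSet_Ioo habs, ← integral_Ioc_eq_integral_Ioo,
    ← intervalIntegral.integral_of_le hT, mul_integral_expConv (by fun_prop)]

theorem tendsto_integral_abs_cfD_sub_div (hf : ∀ x, HasDerivAt f (f' x) x) (hf' : Continuous f')
    (hf0 : f 0 = 0) {T : ℝ} (hT : 0 ≤ T) (hle : ∀ τ ∈ Icc 0 T, f τ ≤ f' τ) :
    Tendsto (fun β => (∫ t in Ioo 0 T, |cfD 0 (1 - β) f t - f t|) / β) (𝓝[>] 0)
      (𝓝 (f T - ∫ t in (0 : ℝ)..T, f t)) := by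
  have hfc : Continuous f := continuous_iff_continuousAt.mpr fun x => (hf x).continuousAt
  have hβ : Tendsto (fun β : ℝ => β) (𝓝[>] 0) (𝓝 0) := tendsto_nhdsWithin_of_tendsto_nhds tendsto_id
  have hc : Tendsto (fun β : ℝ => (1 - β) / (1 - (1 - β))) (𝓝[>] 0) atTop := by
    simp only [sub_sub_cancel, div_eq_mul_inv]
    exact (tendsto_const_nhds.sub hβ).pos_mul_atTop (by norm_num) tendsto_inv_nhdsGT_zero
  have hint : ∫ t in (0 : ℝ)..T, (f' t - f t) = f T - ∫ t in (0 : ℝ)..T, f t := by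
    rw [intervalIntegral.integral_sub (hf'.intervalIntegrable 0 T) (hfc.intervalIntegrable 0 T),
      intervalIntegral.integral_eq_sub_of_hasDerivAt (fun x _ => hf x) (hf'.intervalIntegrable 0 T),
      hf0, sub_zero]
  have hlim := ((tendsto_const_nhds (x := ∫ t in (0 : ℝ)..T, (f' t - f t))).sub
    ((tendsto_expConv_atTop (by fun_prop : Continuous fun τ => f' τ - f τ) hT).comp hc)).div
    (tendsto_const_nhds.sub hβ) (by norm_num : (1 : ℝ) - 0 ≠ 0)
  rw [sub_zero, sub_zero, div_one, hint] at hlim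
  refine hlim.congr' ?_
  filter_upwards [Ioo_mem_nhdsGT one_pos] with β hβ
  have h := integral_abs_cfD_sub (α := 1 - β) (by linarith [hβ.1]) hf hf' hf0 hT hle
  rw [sub_sub_cancel, hint] at h
  simp only [Pi.div_apply, Function.comp_apply, sub_sub_cancel]
  rw [← h]
  field_simp [hβ.1.ne', (sub_pos.mpr hβ.2).ne']

end CaputoFabrizio

/-- For `g(t) = t^m` on `[0,T]` (so `g'(t) = m t^{m-1}`), `m ≥ 2` fixed and
`0 < T ≤ m-1`, the ratio of the Caputo–Fabrizio and Caputo L¹ errors of order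
`1-β` tends to `((m-T)/T)·(1/(Ψ(m+1) - ln T))` as `β → 0⁺`. -/
theorem cf_caputo_speed_ratio (m : ℕ) (hm : 2 ≤ m) (T : ℝ) (hT0 : 0 < T)
    (hTm : T ≤ (m : ℝ) - 1) :
    Tendsto (fun β : ℝ =>
        (∫ t in Set.Ioo 0 T,
          |cfD 0 (1 - β) (fun τ => (m : ℝ) * τ ^ (m - 1)) t - (m : ℝ) * t ^ (m - 1)|) /
        (∫ t in Set.Ioo 0 T,
          |caputoD 0 (1 - β) (fun τ => (m : ℝ) * τ ^ (m - 1)) t - (m : ℝ) * t ^ (m - 1)|))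
      (nhdsWithin 0 (Set.Ioi 0))
      (nhds ((((m : ℝ) - T) / T) * (1 / (digamma ((m : ℝ) + 1) - Real.log T)))) := by
  have hm0 : m ≠ 0 := by omega
  have hderiv : ∀ x : ℝ, HasDerivAt (fun τ => (m : ℝ) * τ ^ (m - 1))
      ((m : ℝ) * ((m - 1 : ℕ) * x ^ (m - 1 - 1))) x :=
    fun x => (hasDerivAt_pow (m - 1) x).const_mul (m : ℝ)
  have hle : ∀ τ ∈ Icc 0 T, (m : ℝ) * τ ^ (m - 1) ≤ m * ((m - 1 : ℕ) * τ ^ (m - 1 - 1)) :=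
    fun τ hτ => mul_le_mul_of_nonneg_left (pow_le_natCast_mul_pow_pred (by omega) hτ.1
      (by rw [Nat.cast_pred (by omega)]; exact hτ.2.trans hTm)) (Nat.cast_nonneg m)
  have hcf := tendsto_integral_abs_cfD_sub_div hderiv (by fun_prop)
    (by simp [zero_pow (by omega : m - 1 ≠ 0)]) hT0.le hle
  have hΨ : 0 < digamma (m + 1) - log T := sub_pos.mpr ((log_lt_log hT0 (by linarith)).trans_le
    (log_le_digamma_add_one (by positivity)))
  have hlim := hcf.div (tendsto_integral_abs_caputoD_sub_pow_div hm hT0 hTm) (by positivity)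
  have hval : ((m : ℝ) * T ^ (m - 1) - T ^ m) / (T ^ m * (digamma (m + 1) - log T)) =
      ((m - T) / T) * (1 / (digamma (m + 1) - log T)) := by
    rw [← pow_sub_one_mul hm0]
    field_simp
  rw [integral_natCast_mul_pow_pred hm0, hval] at hlim
  refine hlim.congr' ?_
  filter_upwards [self_mem_nhdsWithin] with β (hβ : 0 < β)
  exact div_div_div_cancel_right₀ hβ.ne' _ _
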